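/- Let N be an even positive integer, c₂ real, and c₁ real with c := 2N c₁ an integer. Let N_t, P be positive integers, h_{t,i} ∈ ℂ complex gains, and k_i, l_i, k̃_t, l̃_t integers (path Dopplers and delays, and per-antenna CDDS steps), with m̃_t = k̃_t − c l̃_t and per-antenna MD-CDDS precoding matrices C_t = Π_N^{m̃_t mod N} P^{[k̃_t,l̃_t]} (where P^{[k̃,l̃]} is the diagonal phase-compensation matrix with entries conj(e^{(2πi/N)(m̄ l̃ + N c₂ (((m̄ + m̃) mod N)² − m̄²))})). Then Σ_{t=1}^{N_t} ( Σ_{i=1}^{P} h_{t,i} H(k_i, l_i) ) · C_t = Σ_{t=1}^{N_t} Σ_{i=1}^{P} h_{t,i} e^{−(2πi/N)(N c₁ (2 l_i l̃_t + l̃_t²) + m̃_t l_i)} H(k_i + k̃_t, l_i + l̃_t). That is, the multi-antenna MD-CDDS-AFDM system is equivalent to a single-antenna system whose effective paths have Dopplers k_i + k̃_t, delays l_i + l̃_t, and unit-modulus-rotated gains. -/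

import Mathlib

open Matrix Complex

/-- The `N × N` forward cyclic-shift matrix raised to the (integer) power `l`. -/
noncomputable def cyclicShift (N : ℕ) (l : ℤ) : Matrix (Fin N) (Fin N) ℂ :=
  Matrix.of fun p q => if ((p : ℕ) : ZMod N) = ((q : ℕ) : ZMod N) + (l : ZMod N) then 1 else 0

/-- The digital frequency-shift matrix `Δ_N^k = diag(e^{2πi k n / N}, n = 0,…,N−1)`. -/
noncomputable def dopplerShift (N : ℕ) (k : ℤ) : Matrix (Fin N) (Fin N) ℂ :=
  Matrix.diagonal fun n : Fin N =>
    Complex.exp (2 * Real.pi * Complex.I * (k : ℂ) * ((n : ℕ) : ℂ) / (N : ℂ))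

/-- The `N × N` unitary DFT matrix with entries `F[m,n] = e^{−2πi m n / N} / √N`. -/
noncomputable def dftMatrix (N : ℕ) : Matrix (Fin N) (Fin N) ℂ :=
  Matrix.of fun m n : Fin N =>
    Complex.exp (-(2 * Real.pi * Complex.I * ((m : ℕ) : ℂ) * ((n : ℕ) : ℂ) / (N : ℂ))) /
      (Real.sqrt N : ℂ)

/-- For a real parameter `c`, the diagonal chirp matrix `Λ_c = diag(e^{−2πi c q²})`. -/
noncomputable def chirpMatrix (N : ℕ) (c : ℝ) : Matrix (Fin N) (Fin N) ℂ :=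
  Matrix.diagonal fun q : Fin N =>
    Complex.exp (-(2 * Real.pi * Complex.I * (c : ℂ) * ((q : ℕ) : ℂ) ^ 2))

/-- The DAFT matrix `A = Λ_{c₂} F Λ_{c₁}`. -/
noncomputable def daft (N : ℕ) (c₁ c₂ : ℝ) : Matrix (Fin N) (Fin N) ℂ :=
  chirpMatrix N c₂ * dftMatrix N * chirpMatrix N c₁

/-- The DAFT-domain subchannel matrix `H(k,l) = A Δ_N^k Π_N^l Aᴴ`. -/
noncomputable def subChannel (N : ℕ) (c₁ c₂ : ℝ) (k l : ℤ) : Matrix (Fin N) (Fin N) ℂ :=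
  daft N c₁ c₂ * dopplerShift N k * cyclicShift N l * (daft N c₁ c₂)ᴴ

/-- The phase factor `ℰ(m̄, m̃, l̃) = e^{(2πi/N)(m̄ l̃ + N c₂ (((m̄ + m̃) mod N)² − m̄²))}`. -/
noncomputable def calE (N : ℕ) (c₂ : ℝ) (lt mt : ℤ) (mbar : ℤ) : ℂ :=
  Complex.exp ((2 * Real.pi * Complex.I / (N : ℂ)) *
    ((mbar : ℂ) * (lt : ℂ) +
      (N : ℂ) * (c₂ : ℂ) * ((((mbar + mt) % (N : ℤ) : ℤ) : ℂ) ^ 2 - (mbar : ℂ) ^ 2)))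

/-- The diagonal phase-compensation matrix `P^{[k̃,l̃]}` with entries
`P[m̄,m̄] = conj(ℰ(m̄, m̃, l̃))`. -/
noncomputable def phaseComp (N : ℕ) (c₂ : ℝ) (lt mt : ℤ) : Matrix (Fin N) (Fin N) ℂ :=
  Matrix.diagonal fun mbar : Fin N => (starRingEnd ℂ) (calE N c₂ lt mt ((mbar : ℕ) : ℤ))

/-! The precoder `Π_N^{k - c l} P^{[k,l]}` is itself, up to the phase `e^{-2πi c₁ l²}`, the
subchannel matrix `H(k,l)`: both have the same closed form, which exists because `c = 2N c₁` is an
integer and `N` is even, so that the chirp `n ↦ e^{-2πi c₁ n²}` is `N`-periodic. Since the DAFT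
matrix is unitary and `Π^l Δ^k = e^{-2πi kl/N} Δ^k Π^l`, subchannels multiply as in a Heisenberg
group, `H(k,l) H(k',l') = e^{-2πi k'l/N} H(k+k', l+l')`, and the theorem follows term by term. -/

open scoped Real

lemma Fin.natCast_zmod_inj {N : ℕ} {a b : Fin N} :
    ((a : ℕ) : ZMod N) = ((b : ℕ) : ZMod N) ↔ a = b := by
  rw [ZMod.natCast_eq_natCast_iff', Nat.mod_eq_of_lt a.is_lt, Nat.mod_eq_of_lt b.is_lt,
    Fin.val_inj]

lemma Function.Periodic.eq_of_intCast_zmod_eq {α : Type*} {N : ℕ} {f : ℤ → α}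
    (hf : Function.Periodic f N) {a b : ℤ} (hab : (a : ZMod N) = b) : f a = f b := by
  obtain ⟨j, hj⟩ := (ZMod.intCast_eq_intCast_iff_dvd_sub a b N).mp hab
  rw [← hf.int_mul j a]
  congr 1
  linear_combination -hj

lemma periodic_cexp_two_pi_I_mul_div {N : ℕ} [NeZero N] (a : ℤ) :
    Function.Periodic (fun n : ℤ => cexp (2 * π * I * a * n / N)) N := by
  have hN : (N : ℂ) ≠ 0 := Nat.cast_ne_zero.mpr (NeZero.ne N)
  intro n
  refine exp_eq_exp_iff_exists_int.mpr ⟨a, ?_⟩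
  field_simp
  push_cast
  ring

lemma sum_cexp_two_pi_I_mul_div {N : ℕ} [NeZero N] (a : ℤ) :
    ∑ n : Fin N, cexp (2 * π * I * a * (n : ℕ) / N) = if (a : ZMod N) = 0 then (N : ℂ) else 0 := by
  have hζ := isPrimitiveRoot_exp N (NeZero.ne N)
  set ζ := cexp (2 * π * I / N)
  have hpow (n : ℕ) : cexp (2 * π * I * a * n / N) = (ζ ^ a) ^ n := by
    rw [← exp_int_mul, ← Complex.exp_nat_mul]
    ring_nf
  simp only [hpow, Fin.sum_univ_eq_sum_range (fun n => (ζ ^ a) ^ n), ZMod.intCast_zmod_eq_zero_iff_dvd,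
    ← hζ.zpow_eq_one_iff_dvd]
  split_ifs with h
  · simp [h]
  · rw [geom_sum_eq h, ← zpow_natCast, ← _root_.zpow_mul, mul_comm, _root_.zpow_mul, zpow_natCast,
      hζ.pow_eq_one, _root_.one_zpow, sub_self, zero_div]

lemma sum_mul_cyclicShift_apply {N : ℕ} [NeZero N] {f : ℤ → ℂ} (hf : Function.Periodic f N)
    (l : ℤ) (q : Fin N) : ∑ n : Fin N, f (n : ℕ) * cyclicShift N l n q = f ((q : ℕ) + l) := by
  set n₀ : Fin N := ⟨(((q : ℕ) : ZMod N) + l).val, ZMod.val_lt _⟩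
  have hn₀ : ((n₀ : ℕ) : ZMod N) = ((q : ℕ) : ZMod N) + l := ZMod.natCast_zmod_val _
  rw [Fintype.sum_eq_single n₀ fun n hn => ?_]
  · simp only [cyclicShift, of_apply, hn₀, if_true, mul_one]
    exact hf.eq_of_intCast_zmod_eq (by push_cast; exact hn₀)
  · simp only [cyclicShift, of_apply, ← hn₀, Fin.natCast_zmod_inj, if_neg hn, mul_zero]

lemma cyclicShift_add {N : ℕ} [NeZero N] (a b : ℤ) :
    cyclicShift N (a + b) = cyclicShift N a * cyclicShift N b := by
  ext p q
  have hf : Function.Periodic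
      (fun x : ℤ => if ((p : ℕ) : ZMod N) = (x : ZMod N) + a then (1 : ℂ) else 0) N := by
    intro x
    simp
  rw [mul_apply]
  convert (sum_mul_cyclicShift_apply hf b q).symm using 1
  · simp only [cyclicShift, of_apply]
    push_cast
    ring_nf
  · simp [cyclicShift]

lemma dopplerShift_add (N : ℕ) (a b : ℤ) :
    dopplerShift N (a + b) = dopplerShift N a * dopplerShift N b := by
  rw [dopplerShift, dopplerShift, dopplerShift, diagonal_mul_diagonal]
  congr 1
  ext n
  rw [← Complex.exp_add]
  push_cast
  ring_nf

lemma cyclicShift_mul_dopplerShift {N : ℕ} [NeZero N] (k l : ℤ) :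
    cyclicShift N l * dopplerShift N k =
      cexp (-(2 * π * I * k * l / N)) • (dopplerShift N k * cyclicShift N l) := by
  ext p q
  simp only [dopplerShift, mul_diagonal, diagonal_mul, Matrix.smul_apply, smul_eq_mul, cyclicShift,
    of_apply, mul_ite, ite_mul, mul_one, one_mul, mul_zero, zero_mul]
  split_ifs with hpq
  · have hp := (periodic_cexp_two_pi_I_mul_div (N := N) k).eq_of_intCast_zmod_eq
      (a := (p : ℕ)) (b := (q : ℕ) + l) (by push_cast; exact hpq)
    simp only [Int.cast_natCast, Int.cast_add] at hp
    rw [hp, ← Complex.exp_add]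
    ring_nf
  · rfl

lemma chirpMatrix_mem_unitaryGroup (N : ℕ) (c : ℝ) :
    chirpMatrix N c ∈ unitaryGroup (Fin N) ℂ := by
  rw [mem_unitaryGroup_iff', star_eq_conjTranspose, chirpMatrix, diagonal_conjTranspose,
    diagonal_mul_diagonal, ← diagonal_one]
  congr 1
  ext q
  rw [Pi.star_apply, star_def, ← Complex.exp_conj, ← Complex.exp_add]
  simp [map_ofNat]

lemma dftMatrix_mem_unitaryGroup (N : ℕ) [NeZero N] :
    dftMatrix N ∈ unitaryGroup (Fin N) ℂ := by
  have hN : (N : ℂ) ≠ 0 := Nat.cast_ne_zero.mpr (NeZero.ne N)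
  have hsqrt : (Real.sqrt N : ℂ) * (Real.sqrt N : ℂ) = N := by
    rw [← ofReal_mul, Real.mul_self_sqrt (Nat.cast_nonneg N), ofReal_natCast]
  rw [mem_unitaryGroup_iff']
  ext n n'
  have hterm (m : Fin N) : star (dftMatrix N m n) * dftMatrix N m n' =
      cexp (2 * π * I * (((n : ℕ) - (n' : ℕ) : ℤ) : ℂ) * (m : ℕ) / N) / N := by
    simp only [dftMatrix, of_apply, star_def, map_div₀, ← Complex.exp_conj, conj_ofReal]
    rw [div_mul_div_comm, ← Complex.exp_add, hsqrt]
    congr 2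
    simp only [map_neg, map_div₀, map_mul, conj_ofReal, conj_I, conj_natCast, map_ofNat]
    push_cast
    ring
  simp only [mul_apply, star_apply, hterm, ← Finset.sum_div, sum_cexp_two_pi_I_mul_div, one_apply]
  push_cast
  simp only [sub_eq_zero, Fin.natCast_zmod_inj]
  split_ifs <;> simp [hN]

lemma daft_mem_unitaryGroup (N : ℕ) [NeZero N] (c₁ c₂ : ℝ) :
    daft N c₁ c₂ ∈ unitaryGroup (Fin N) ℂ :=
  mul_mem (mul_mem (chirpMatrix_mem_unitaryGroup N c₂) (dftMatrix_mem_unitaryGroup N))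
    (chirpMatrix_mem_unitaryGroup N c₁)

lemma subChannel_mul_subChannel (N : ℕ) [NeZero N] (c₁ c₂ : ℝ) (k l k' l' : ℤ) :
    subChannel N c₁ c₂ k l * subChannel N c₁ c₂ k' l' =
      cexp (-(2 * π * I * k' * l / N)) • subChannel N c₁ c₂ (k + k') (l + l') := by
  have hA : (daft N c₁ c₂)ᴴ * daft N c₁ c₂ = 1 :=
    mem_unitaryGroup_iff'.mp (daft_mem_unitaryGroup N c₁ c₂)
  simp only [subChannel, dopplerShift_add, cyclicShift_add, Matrix.mul_assoc]
  rw [← Matrix.mul_assoc (daft N c₁ c₂)ᴴ, hA, Matrix.one_mul, ← Matrix.mul_assoc (cyclicShift N l),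
    cyclicShift_mul_dopplerShift]
  simp only [Matrix.smul_mul, Matrix.mul_smul, Matrix.mul_assoc]

/-- `daft N c₁ c₂ p n` for integer indices: extending the column index to `ℤ` is what lets the
cyclic shift be absorbed by periodicity. -/
noncomputable def daftKernel (N : ℕ) (c₁ c₂ : ℝ) (p n : ℤ) : ℂ :=
  cexp (-(2 * π * I * (c₂ * p ^ 2 + p * n / N + c₁ * n ^ 2))) / Real.sqrt N

lemma daft_apply (N : ℕ) (c₁ c₂ : ℝ) (p n : Fin N) :
    daft N c₁ c₂ p n = daftKernel N c₁ c₂ (p : ℕ) (n : ℕ) := by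
  simp only [daft, chirpMatrix, dftMatrix, mul_diagonal, diagonal_mul, of_apply, daftKernel]
  rw [mul_div_assoc', div_mul_eq_mul_div, ← Complex.exp_add, ← Complex.exp_add]
  push_cast
  ring_nf

lemma daftKernel_periodic {N : ℕ} [NeZero N] (hEven : Even N) {c₁ : ℝ} {c : ℤ}
    (hc : 2 * (N : ℝ) * c₁ = c) (c₂ : ℝ) (p : ℤ) :
    Function.Periodic (daftKernel N c₁ c₂ p) N := by
  have hN : (N : ℂ) ≠ 0 := Nat.cast_ne_zero.mpr (NeZero.ne N)
  obtain ⟨M, hM⟩ := hEven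
  have hc' : (c₁ : ℂ) = c / (2 * N) := by
    rw [eq_div_iff (by simpa using hN)]
    exact_mod_cast (by linarith : c₁ * (2 * N) = c)
  intro n
  simp only [daftKernel]
  congr 1
  refine exp_eq_exp_iff_exists_int.mpr ⟨-(p + c * n + c * M), ?_⟩
  rw [hc']
  field_simp
  push_cast [hM]
  ring

lemma daftKernel_mul_cexp_mul_conj_daftKernel {N : ℕ} [NeZero N] {c₁ : ℝ} {c : ℤ}
    (hc : 2 * (N : ℝ) * c₁ = c) (c₂ : ℝ) (k l p r n : ℤ) :
    daftKernel N c₁ c₂ p (n + l) * cexp (2 * π * I * k * ↑(n + l) / N) *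
        star (daftKernel N c₁ c₂ r n) =
      cexp (2 * π * I * (c₂ * (r ^ 2 - p ^ 2) + (k - p) * l / N - c₁ * l ^ 2)) / N *
        cexp (2 * π * I * ↑(k - p + r - c * l) * n / N) := by
  have hN : (N : ℂ) ≠ 0 := Nat.cast_ne_zero.mpr (NeZero.ne N)
  have hsqrt : (Real.sqrt N : ℂ) * (Real.sqrt N : ℂ) = N := by
    rw [← ofReal_mul, Real.mul_self_sqrt (Nat.cast_nonneg N), ofReal_natCast]
  have hc' : (c : ℂ) = 2 * N * c₁ := by exact_mod_cast hc.symm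
  simp only [daftKernel, star_def, map_div₀, ← Complex.exp_conj, conj_ofReal, map_neg, map_mul,
    map_add, map_pow, conj_I, conj_natCast, map_intCast, map_ofNat]
  rw [div_mul_eq_mul_div, div_mul_div_comm, hsqrt, div_mul_eq_mul_div, ← Complex.exp_add,
    ← Complex.exp_add, ← Complex.exp_add]
  congr 2
  push_cast
  rw [hc']
  field_simp
  ring

lemma subChannel_apply {N : ℕ} [NeZero N] (hEven : Even N) {c₁ : ℝ} {c : ℤ}
    (hc : 2 * (N : ℝ) * c₁ = c) (c₂ : ℝ) (k l : ℤ) (p r : Fin N) :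
    subChannel N c₁ c₂ k l p r =
      if ((p : ℕ) : ZMod N) = ((r : ℕ) : ZMod N) + ((k - c * l : ℤ) : ZMod N) then
        cexp (2 * π * I * (c₂ * (((r : ℕ) : ℂ) ^ 2 - ((p : ℕ) : ℂ) ^ 2) +
          (k - ((p : ℕ) : ℂ)) * l / N - c₁ * l ^ 2))
      else 0 := by
  have hN : (N : ℂ) ≠ 0 := Nat.cast_ne_zero.mpr (NeZero.ne N)
  have hrow : Function.Periodic
      (fun n : ℤ => daftKernel N c₁ c₂ (p : ℕ) n * cexp (2 * π * I * k * n / N)) N :=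
    (daftKernel_periodic hEven hc c₂ _).mul (periodic_cexp_two_pi_I_mul_div k)
  have hsum (n' : Fin N) : (daft N c₁ c₂ * dopplerShift N k * cyclicShift N l) p n' =
      daftKernel N c₁ c₂ (p : ℕ) ((n' : ℕ) + l) * cexp (2 * π * I * k * ↑((n' : ℕ) + l) / N) := by
    rw [mul_apply, ← sum_mul_cyclicShift_apply hrow l n']
    simp only [dopplerShift, mul_diagonal, daft_apply, Int.cast_natCast]
  simp only [subChannel, mul_apply (M := _ * cyclicShift N l), hsum, conjTranspose_apply, daft_apply,
    daftKernel_mul_cexp_mul_conj_daftKernel hc, ← Finset.mul_sum, Int.cast_natCast,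
    sum_cexp_two_pi_I_mul_div]
  have hcond : (((k - ((p : ℕ) : ℤ) + ((r : ℕ) : ℤ) - c * l : ℤ)) : ZMod N) = 0 ↔
      ((p : ℕ) : ZMod N) = ((r : ℕ) : ZMod N) + ((k - c * l : ℤ) : ZMod N) := by
    push_cast
    constructor <;> intro h <;> linear_combination -h
  simp only [hcond]
  split_ifs
  · field_simp
  · rw [mul_zero]

lemma cyclicShift_mul_phaseComp {N : ℕ} [NeZero N] (hEven : Even N) {c₁ : ℝ} {c : ℤ}
    (hc : 2 * (N : ℝ) * c₁ = c) (c₂ : ℝ) (k l : ℤ) :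
    cyclicShift N (k - c * l) * phaseComp N c₂ l (k - c * l) =
      cexp (-(2 * π * I * c₁ * l ^ 2)) • subChannel N c₁ c₂ k l := by
  have hN : (N : ℂ) ≠ 0 := Nat.cast_ne_zero.mpr (NeZero.ne N)
  have hc' : (c : ℂ) = 2 * N * c₁ := by exact_mod_cast hc.symm
  ext p r
  simp only [phaseComp, mul_diagonal, Matrix.smul_apply, smul_eq_mul, subChannel_apply hEven hc,
    cyclicShift, of_apply, ite_mul, one_mul, zero_mul, mul_ite, mul_zero]
  split_ifs with hpr
  · have hpr' : ((((r : ℕ) : ℤ) + (k - c * l) : ℤ) : ZMod N) = (((p : ℕ) : ℤ) : ZMod N) := by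
      push_cast at hpr ⊢
      exact hpr.symm
    have hmod : (((r : ℕ) : ℤ) + (k - c * l)) % N = (p : ℕ) := by
      rw [← Int.emod_eq_of_lt (a := (p : ℕ)) (b := N) (by positivity) (by exact_mod_cast p.is_lt),
        ← ZMod.intCast_eq_intCast_iff', hpr']
    obtain ⟨j, hj⟩ := (ZMod.intCast_eq_intCast_iff_dvd_sub _ _ N).mp hpr'
    have hp : ((p : ℕ) : ℂ) = (r : ℕ) + (k - c * l) + N * j := by
      exact_mod_cast (by linarith : ((p : ℕ) : ℤ) = (r : ℕ) + (k - c * l) + N * j)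
    rw [calE, hmod, ← Complex.exp_conj, ← Complex.exp_add]
    refine exp_eq_exp_iff_exists_int.mpr ⟨j * l, ?_⟩
    simp only [map_mul, map_div₀, map_add, map_sub, map_pow, conj_I, conj_ofReal,
      conj_natCast, map_intCast, map_ofNat]
    push_cast
    rw [hp, hc']
    field_simp
    ring
  · rfl

theorem mdcdds_afdm_equivalent_channel_general (N Nt P : ℕ) (hN : 0 < N) (hEven : Even N)
    (c₁ c₂ : ℝ) (c : ℤ) (hc : 2 * (N : ℝ) * c₁ = (c : ℝ))
    (h : Fin Nt → Fin P → ℂ) (kp lp : Fin P → ℤ) (kt lt : Fin Nt → ℤ) :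
    ∑ t : Fin Nt,
      (∑ i : Fin P, h t i • subChannel N c₁ c₂ (kp i) (lp i)) *
        (cyclicShift N (kt t - c * lt t) * phaseComp N c₂ (lt t) (kt t - c * lt t)) =
    ∑ t : Fin Nt, ∑ i : Fin P,
      (h t i * Complex.exp (-((2 * Real.pi * Complex.I / (N : ℂ)) *
          ((N : ℂ) * (c₁ : ℂ) * (2 * (lp i : ℂ) * (lt t : ℂ) + (lt t : ℂ) ^ 2) +
            ((kt t - c * lt t : ℤ) : ℂ) * (lp i : ℂ))))) •
        subChannel N c₁ c₂ (kp i + kt t) (lp i + lt t) := by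
  have : NeZero N := ⟨hN.ne'⟩
  have hphase (l k' l' : ℤ) : cexp (-(2 * π * I * c₁ * l' ^ 2)) * cexp (-(2 * π * I * k' * l / N)) =
      cexp (-((2 * π * I / N) * (N * c₁ * (2 * l * l' + l' ^ 2) + ((k' - c * l' : ℤ) : ℂ) * l))) := by
    have hN' : (N : ℂ) ≠ 0 := Nat.cast_ne_zero.mpr hN.ne'
    have hc' : (c : ℂ) = 2 * N * c₁ := by exact_mod_cast hc.symm
    rw [← Complex.exp_add]
    congr 1
    push_cast
    rw [hc']
    field_simp
    ring
  refine Finset.sum_congr rfl fun t _ => ?_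
  rw [Finset.sum_mul]
  refine Finset.sum_congr rfl fun i _ => ?_
  rw [smul_mul_assoc, cyclicShift_mul_phaseComp hEven hc, mul_smul_comm, subChannel_mul_subChannel,
    smul_smul, smul_smul, mul_assoc, hphase]

/-- the multi-antenna MD-CDDS-AFDM system is equivalent to a single-antenna
system whose effective paths have Dopplers `k_i + k̃_t`, delays `l_i + l̃_t`, and
unit-modulus-rotated gains:
`Σ_t (Σ_i h_{t,i} H(k_i,l_i)) C_t
  = Σ_t Σ_i h_{t,i} e^{−(2πi/N)(N c₁ (2 l_i l̃_t + l̃_t²) + m̃_t l_i)} H(k_i+k̃_t, l_i+l̃_t)`,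
with `C_t = Π_N^{m̃_t} P^{[k̃_t,l̃_t]}`, `m̃_t = k̃_t − c l̃_t`, `c = 2 N c₁` an integer. -/
theorem mdcdds_afdm_equivalent_channel (N Nt P : ℕ) (hN : 0 < N) (hEven : Even N)
    (hNt : 0 < Nt) (hP : 0 < P) (c₁ c₂ : ℝ) (c : ℤ) (hc : 2 * (N : ℝ) * c₁ = (c : ℝ))
    (h : Fin Nt → Fin P → ℂ) (kp lp : Fin P → ℤ) (kt lt : Fin Nt → ℤ) :
    ∑ t : Fin Nt,
      (∑ i : Fin P, h t i • subChannel N c₁ c₂ (kp i) (lp i)) *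
        (cyclicShift N (kt t - c * lt t) * phaseComp N c₂ (lt t) (kt t - c * lt t)) =
    ∑ t : Fin Nt, ∑ i : Fin P,
      (h t i * Complex.exp (-((2 * Real.pi * Complex.I / (N : ℂ)) *
          ((N : ℂ) * (c₁ : ℂ) * (2 * (lp i : ℂ) * (lt t : ℂ) + (lt t : ℂ) ^ 2) +
            ((kt t - c * lt t : ℤ) : ℂ) * (lp i : ℂ))))) •
        subChannel N c₁ c₂ (kp i + kt t) (lp i + lt t) :=
  mdcdds_afdm_equivalent_channel_general N Nt P hN hEven c₁ c₂ c hc h kp lp kt lt
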